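/- arXiv:0905.4679 — 4 statements merged into one kernel-verified Lean document; each statement's English description precedes it below -/
import Mathlib

section
/- Every single-valued weakly continuous function is continuous: let D ⊆ ℕ^ℕ and φ : ℕ^ℕ → ℕ^ℕ, and let f be the multi-valued function with f(p) = {φ(p)} for p ∈ D and f(p) = ∅ otherwise. If f ≤_W \widehat{LLPO}, then the restriction of φ to D is continuous (φ is continuous on D with respect to the subspace topology of ℕ^ℕ). -/
/-- Baire space `ℕ^ℕ` with the product topology (`ℕ` discrete). -/
abbrev Baire : Type := ℕ → ℕ

/-- The pairing `⟨p,q⟩` on Baire space: `⟨p,q⟩(2n) = p(n)`, `⟨p,q⟩(2n+1) = q(n)`. -/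
def bpair (p q : Baire) : Baire := fun n => if n % 2 = 0 then p (n / 2) else q (n / 2)

/-- First projection `π₁`. -/
def proj1 (r : Baire) : Baire := fun n => r (2 * n)

/-- Second projection `π₂`. -/
def proj2 (r : Baire) : Baire := fun n => r (2 * n + 1)

/-- Multi-valued functions on Baire space. -/
abbrev MV : Type := Baire → Set Baire

/-- The domain of a multi-valued function. -/
def dom (f : MV) : Set Baire := {p | (f p).Nonempty}

/-- `F` is a realizer of `f`: `F p ∈ f p` for all `p` in the domain of `f`. -/
def Realizes (F : Baire → Baire) (f : MV) : Prop := ∀ p, (f p).Nonempty → F p ∈ f p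

/-- Continuous Weihrauch reducibility `f ≤_W g`. -/
def WRed (f g : MV) : Prop :=
  ∃ H K : Baire → Baire, Continuous H ∧ Continuous K ∧
    ∀ G : Baire → Baire, Realizes G g → Realizes (fun p => H (bpair p (G (K p)))) f

/-- Strong continuous Weihrauch reducibility `f ≤_sW g`. -/
def SWRed (f g : MV) : Prop :=
  ∃ H K : Baire → Baire, Continuous H ∧ Continuous K ∧
    ∀ G : Baire → Baire, Realizes G g → Realizes (fun p => H (G (K p))) f

/-- Continuous Weihrauch equivalence. -/
def WEquiv (f g : MV) : Prop := WRed f g ∧ WRed g f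

/-- Strong continuous Weihrauch equivalence. -/
def SWEquiv (f g : MV) : Prop := SWRed f g ∧ SWRed g f

/-- The parallelized lesser limited principle of omniscience. -/
def parLLPO : MV := fun p =>
  {q | ∀ k, (q k = 0 ∧ ∀ n, p (Nat.pair k (2 * n)) = 0) ∨
            (q k = 1 ∧ ∀ n, p (Nat.pair k (2 * n + 1)) = 0)}

/-!
For `p ∈ D` the reduction must output `φ p` whatever answer `q` a realizer of `\widehat{LLPO}`
gives at `K p` (any `q` at all if there is no correct answer), so `φ p = H⟨p, q⟩` for all such
`q`. The correct answers form a compact subset of Cantor space depending upper semicontinuously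
on `p`, because the graph of `\widehat{LLPO}` is closed; two applications of the tube lemma then
turn the continuity of `H` into continuity of `φ` on `D`.
-/

open Set Filter Topology

section UpperSemicontinuous

variable {X Y Z : Type*} {S : X → Set Y}

/-- The values a realizer of `S` may take at `x`. -/
def IsAdmissible (S : X → Set Y) (x : X) (y : Y) : Prop := (S x).Nonempty → y ∈ S x

theorem exists_isAdmissible_mem {v : Set Y} (x : X) (hv : S x ⊆ v) (hv₀ : v.Nonempty) :
    ∃ y ∈ v, IsAdmissible S x y := by
  by_cases hne : (S x).Nonempty
  · obtain ⟨y, hy⟩ := hne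
    exact ⟨y, hv hy, fun _ => hy⟩
  · obtain ⟨y, hy⟩ := hv₀
    exact ⟨y, hy, fun h => absurd h hne⟩

variable [TopologicalSpace X] [TopologicalSpace Y] [TopologicalSpace Z] {C : Set Y}

theorem eventually_subset_of_isClosed_graph (hS : IsClosed {z : X × Y | z.2 ∈ S z.1})
    (hC : IsCompact C) (hSC : ∀ x, S x ⊆ C) {x₀ : X} {v : Set Y} (hv : IsOpen v)
    (hx₀v : S x₀ ⊆ v) : ∀ᶠ x in 𝓝 x₀, S x ⊆ v := by
  obtain ⟨u, v', hu, -, hx₀u, hCv, huv⟩ :=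
    generalized_tube_lemma isCompact_singleton (hC.diff hv) hS.isOpen_compl
      (by rintro ⟨x, y⟩ ⟨rfl, -, hyv⟩ hy; exact hyv (hx₀v hy))
  filter_upwards [hu.mem_nhds (hx₀u rfl)] with x hxu y hy
  by_contra hyv
  exact huv (mk_mem_prod hxu (hCv ⟨hSC x hy, hyv⟩)) hy

theorem continuousOn_of_eq_on_isAdmissible [Nonempty Y]
    (hS : IsClosed {z : X × Y | z.2 ∈ S z.1}) (hC : IsCompact C) (hSC : ∀ x, S x ⊆ C)
    {h : X × Y → Z} (hh : Continuous h) {φ : X → Z} {D : Set X}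
    (hφ : ∀ x ∈ D, ∀ y, IsAdmissible S x y → h (x, y) = φ x) : ContinuousOn φ D := by
  intro x₀ hx₀
  rw [ContinuousWithinAt, tendsto_nhds]
  intro W hW hx₀W
  obtain ⟨y₀, -, hy₀⟩ := exists_isAdmissible_mem (S := S) x₀ (subset_univ _) univ_nonempty
  have hSx₀ : IsCompact (S x₀) :=
    hC.of_isClosed_subset (hS.preimage (Continuous.prodMk_right x₀)) (hSC x₀)
  obtain ⟨u, v, hu, hv, hx₀u, hy₀v, huv⟩ :=
    generalized_tube_lemma isCompact_singleton (hSx₀.insert y₀) (hW.preimage hh) <| by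
      rintro ⟨x, y⟩ ⟨hx, hy⟩
      obtain rfl : x = x₀ := hx
      have hxy : IsAdmissible S x y := by
        rcases hy with rfl | hy
        exacts [hy₀, fun _ => hy]
      rw [mem_preimage, hφ x hx₀ y hxy]
      exact hx₀W
  have hSv : ∀ᶠ x in 𝓝 x₀, S x ⊆ v :=
    eventually_subset_of_isClosed_graph hS hC hSC hv ((subset_insert _ _).trans hy₀v)
  filter_upwards [nhdsWithin_le_nhds (hu.mem_nhds (hx₀u rfl)), nhdsWithin_le_nhds hSv,
    self_mem_nhdsWithin] with x hxu hxv hxD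
  obtain ⟨y, hyv, hy⟩ := exists_isAdmissible_mem x hxv ⟨y₀, hy₀v (mem_insert _ _)⟩
  rw [mem_preimage, ← hφ x hxD y hy]
  exact huv ⟨hxu, hyv⟩

end UpperSemicontinuous

theorem continuous_bpair : Continuous fun z : Baire × Baire => bpair z.1 z.2 := by
  refine continuous_pi fun i => ?_
  by_cases hi : i % 2 = 0 <;> simp only [bpair, hi, if_true, if_false] <;> fun_prop

theorem isClosed_graph_parLLPO : IsClosed {z : Baire × Baire | z.2 ∈ parLLPO z.1} := by
  change IsClosed {z : Baire × Baire | ∀ k, (z.2 k = 0 ∧ ∀ n, z.1 (Nat.pair k (2 * n)) = 0) ∨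
    (z.2 k = 1 ∧ ∀ n, z.1 (Nat.pair k (2 * n + 1)) = 0)}
  simp only [ofPred_forall, ofPred_or, ofPred_and]
  refine isClosed_iInter fun k => .union (.inter ?_ (isClosed_iInter fun n => ?_))
    (.inter ?_ (isClosed_iInter fun n => ?_)) <;> exact isClosed_eq (by fun_prop) continuous_const

theorem parLLPO_subset_cantor (x : Baire) : parLLPO x ⊆ univ.pi fun _ => Iic 1 := by
  intro q hq k _
  rcases hq k with ⟨hk, -⟩ | ⟨hk, -⟩ <;> simp [hk]

theorem isCompact_cantor : IsCompact (univ.pi fun _ : ℕ => Iic (1 : ℕ)) :=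
  isCompact_univ_pi fun _ => (finite_Iic 1).isCompact

theorem exists_realizes_apply_eq {g : MV} {x q : Baire} (hq : IsAdmissible g x q) :
    ∃ G, Realizes G g ∧ G x = q := by
  classical
  refine ⟨Function.update (fun y => Classical.epsilon (· ∈ g y)) x q, fun y hy => ?_,
    Function.update_self ..⟩
  by_cases hyx : y = x
  · subst hyx
    simpa using hq hy
  · simpa [hyx] using Classical.epsilon_spec hy

theorem apply_bpair_eq_of_isAdmissible {f g : MV} {H K : Baire → Baire}
    (hHK : ∀ G, Realizes G g → Realizes (fun p => H (bpair p (G (K p)))) f)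
    {p y q : Baire} (hp : f p = {y}) (hq : IsAdmissible g (K p) q) : H (bpair p q) = y := by
  obtain ⟨G, hG, hGq⟩ := exists_realizes_apply_eq hq
  have := hHK G hG p (by simp [hp])
  simpa [hp, hGq] using this

theorem singleValued_weaklyContinuous_continuous_general (D : Set Baire) (φ : Baire → Baire)
    (f : MV) (hfD : ∀ p ∈ D, f p = {φ p})
    (h : WRed f parLLPO) : ContinuousOn φ D := by
  obtain ⟨H, K, hH, hK, hHK⟩ := h
  exact continuousOn_of_eq_on_isAdmissible (S := fun p => parLLPO (K p))
    (isClosed_graph_parLLPO.preimage (hK.prodMap continuous_id)) isCompact_cantor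
    (fun p => parLLPO_subset_cantor (K p)) (hH.comp continuous_bpair)
    fun p hp q hq => apply_bpair_eq_of_isAdmissible hHK (hfD p hp) hq

/-- Every single-valued weakly continuous function is continuous: if `f` is the
multi-valued function with `f(p) = {φ(p)}` on `D` and `∅` elsewhere, and
`f ≤_W \widehat{LLPO}`, then `φ` is continuous on `D`. -/
theorem singleValued_weaklyContinuous_continuous (D : Set Baire) (φ : Baire → Baire)
    (f : MV) (hfD : ∀ p ∈ D, f p = {φ p}) (hfD' : ∀ p ∉ D, f p = (∅ : Set Baire))
    (h : WRed f parLLPO) : ContinuousOn φ D :=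
  singleValued_weaklyContinuous_continuous_general D φ f hfD h
end

section
/- Parallelization commutes with products up to strong equivalence: for all multi-valued functions f, g on Baire space, (f × g)^∧ ≡_sW f̂ × ĝ. -/
/-- The product `f × g` of multi-valued functions. -/
def mprod (f g : MV) : MV := fun r =>
  {s | ∃ y ∈ f (proj1 r), ∃ v ∈ g (proj2 r), s = bpair y v}

/-- The `i`-th component `(p)ᵢ` of `p`, `(p)ᵢ(j) = p⟨i,j⟩`. -/
def comp (p : Baire) (i : ℕ) : Baire := fun j => p (Nat.pair i j)

/-- The parallelization `f̂` of a multi-valued function `f`. -/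
def par (f : MV) : MV := fun p => {q | ∀ i, comp q i ∈ f (comp p i)}

/-!
Rearranging a sequence of pairs `(⟨y_i, v_i⟩)_i` into the pair of sequences `⟨(y_i)_i, (v_i)_i⟩`
is a continuous map of Baire space with a continuous right inverse, and it carries the instances
and solutions of `(f × g)^∧` exactly onto those of `f̂ × ĝ`. Pre- and post-composing a realizer
with these two maps therefore gives both strong reductions.
-/

def ofComps (c : ℕ → Baire) : Baire := fun n => c n.unpair.1 n.unpair.2

/-- Sends `⟨(y_i)_i, (v_i)_i⟩` to `(⟨y_i, v_i⟩)_i`. -/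
def parPair (r : Baire) : Baire :=
  ofComps fun i => bpair (comp (proj1 r) i) (comp (proj2 r) i)

/-- Sends `(⟨y_i, v_i⟩)_i` to `⟨(y_i)_i, (v_i)_i⟩`. -/
def parUnpair (r : Baire) : Baire :=
  bpair (ofComps fun i => proj1 (comp r i)) (ofComps fun i => proj2 (comp r i))

@[simp]
lemma proj1_bpair (p q : Baire) : proj1 (bpair p q) = p := by
  funext n
  simp [proj1, bpair]

@[simp]
lemma proj2_bpair (p q : Baire) : proj2 (bpair p q) = q := by
  funext n
  simp [proj2, bpair, Nat.add_mod, Nat.add_div]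

lemma bpair_proj1_proj2 (r : Baire) : bpair (proj1 r) (proj2 r) = r := by
  funext n
  unfold bpair proj1 proj2
  split <;> congr 1 <;> omega

@[simp]
lemma comp_ofComps (c : ℕ → Baire) (i : ℕ) : comp (ofComps c) i = c i := by
  funext j
  simp [comp, ofComps]

@[simp]
lemma ofComps_comp (p : Baire) : ofComps (comp p) = p := by
  funext n
  simp [ofComps, comp]

lemma mem_mprod_iff {f g : MV} {r s : Baire} :
    s ∈ mprod f g r ↔ proj1 s ∈ f (proj1 r) ∧ proj2 s ∈ g (proj2 r) := by
  constructor
  · rintro ⟨y, hy, v, hv, rfl⟩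
    simpa using ⟨hy, hv⟩
  · rintro ⟨hy, hv⟩
    exact ⟨_, hy, _, hv, (bpair_proj1_proj2 s).symm⟩

lemma parUnpair_parPair (r : Baire) : parUnpair (parPair r) = r := by
  simp [parUnpair, parPair, bpair_proj1_proj2]

lemma mem_par_mprod_iff {f g : MV} {p q : Baire} :
    q ∈ par (mprod f g) p ↔ parUnpair q ∈ mprod (par f) (par g) (parUnpair p) := by
  simp only [par, parUnpair, mem_mprod_iff, Set.mem_ofPred_eq, proj1_bpair, proj2_bpair,
    comp_ofComps, forall_and]

section Continuity

variable {X : Type*} [TopologicalSpace X]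

@[fun_prop]
lemma Continuous.bpair {F G : X → Baire} (hF : Continuous F) (hG : Continuous G) :
    Continuous fun x => _root_.bpair (F x) (G x) := by
  refine continuous_pi fun _ => ?_
  unfold _root_.bpair
  split
  exacts [(continuous_apply _).comp hF, (continuous_apply _).comp hG]

@[fun_prop]
lemma Continuous.ofComps {c : X → ℕ → Baire} (hc : ∀ i, Continuous fun x => c x i) :
    Continuous fun x => _root_.ofComps (c x) :=
  continuous_pi fun _ => (continuous_apply _).comp (hc _)

@[fun_prop]
lemma continuous_proj1 : Continuous proj1 :=
  continuous_pi fun _ => continuous_apply _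

@[fun_prop]
lemma continuous_proj2 : Continuous proj2 :=
  continuous_pi fun _ => continuous_apply _

@[fun_prop]
lemma continuous_comp (i : ℕ) : Continuous fun p => comp p i :=
  continuous_pi fun _ => continuous_apply _

end Continuity

lemma continuous_parPair : Continuous parPair := by
  unfold parPair
  fun_prop

lemma continuous_parUnpair : Continuous parUnpair := by
  unfold parUnpair
  fun_prop

lemma SWEquiv.of_leftInverse {f g : MV} {φ ψ : Baire → Baire} (hφ : Continuous φ)
    (hψ : Continuous ψ) (hinv : Function.LeftInverse ψ φ)
    (hmem : ∀ p q, q ∈ f p ↔ ψ q ∈ g (ψ p)) : SWEquiv f g := by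
  constructor
  · refine ⟨φ, ψ, hφ, hψ, fun G hG p ⟨q, hq⟩ => ?_⟩
    rw [hmem, hinv]
    exact hG _ ⟨_, (hmem p q).1 hq⟩
  · refine ⟨ψ, φ, hψ, hφ, fun G hG r ⟨s, hs⟩ => ?_⟩
    have hsol : φ s ∈ f (φ r) := by rwa [hmem, hinv, hinv]
    have hG' := (hmem _ _).1 (hG _ ⟨_, hsol⟩)
    rwa [hinv] at hG'

/-- Parallelization commutes with products: `(f × g)^∧ ≡_sW f̂ × ĝ`. -/
theorem par_prod (f g : MV) : SWEquiv (par (mprod f g)) (mprod (par f) (par g)) :=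
  SWEquiv.of_leftInverse continuous_parPair continuous_parUnpair parUnpair_parPair
    fun _ _ => mem_par_mprod_iff
end

section
/- LPO is reducible to every discontinuous function: let D ⊆ ℕ^ℕ and F : ℕ^ℕ → ℕ^ℕ be such that the restriction of F to D is not continuous (as a map from the subspace D to ℕ^ℕ). Then there exist continuous total K, H : ℕ^ℕ → ℕ^ℕ with K(ℕ^ℕ) ⊆ D such that H ∘ F ∘ K is a realizer of LPO (i.e. for all p ∈ ℕ^ℕ, H(F(K(p)))(0) = 0 if ∃ n, p(n) = 0, and H(F(K(p)))(0) = 1 otherwise). -/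
/-- The limited principle of omniscience `LPO`. -/
def LPO : MV := fun p =>
  {q | ((∃ n, p n = 0) ∧ q 0 = 0) ∨ ((¬ ∃ n, p n = 0) ∧ q 0 = 1)}

/-!
At a point `x ∈ D` where `F` is discontinuous, some output coordinate `i` of `F` is discontinuous,
so (Baire space being first countable) there are `yₙ ∈ D` converging to `x` with
`F yₙ i ≠ F x i`. Sending `p` to `yₘ` for the first zero `m` of `p`, and to `x` if `p` has no zero,
is continuous because `yₙ → x`; afterwards, testing whether coordinate `i` equals `F x i` decides LPO.
-/

open Filter Topology PiNat

theorem mem_closure_of_not_continuousWithinAt {X β : Type*} [TopologicalSpace X]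
    [TopologicalSpace β] [DiscreteTopology β] {f : X → β} {s : Set X} {x : X}
    (hf : ¬ ContinuousWithinAt f s x) : x ∈ closure {y ∈ s | f y ≠ f x} := by
  rw [ContinuousWithinAt, nhds_discrete, tendsto_pure, not_eventually,
    frequently_nhdsWithin_iff] at hf
  exact mem_closure_iff_frequently.2 (hf.mono fun y hy => ⟨hy.2, hy.1⟩)

section SwitchAtFirstZero

variable {β : Type*} (x : β) (y : ℕ → β)

open Classical in
noncomputable def switchAtFirstZero (p : Baire) : β :=
  if h : ∃ n, p n = 0 then y (Nat.find h) else x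

theorem switchAtFirstZero_of_exists {p : Baire} (h : ∃ n, p n = 0) :
    switchAtFirstZero x y p = y (Nat.find h) :=
  dif_pos h

theorem switchAtFirstZero_of_not_exists {p : Baire} (h : ¬ ∃ n, p n = 0) :
    switchAtFirstZero x y p = x :=
  dif_neg h

theorem switchAtFirstZero_mem {s : Set β} (hx : x ∈ s) (hy : ∀ n, y n ∈ s) (p : Baire) :
    switchAtFirstZero x y p ∈ s := by
  by_cases h : ∃ n, p n = 0
  · rw [switchAtFirstZero_of_exists x y h]; exact hy _
  · rw [switchAtFirstZero_of_not_exists x y h]; exact hx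

theorem switchAtFirstZero_eventuallyEq {p : Baire} (h : ∃ n, p n = 0) :
    switchAtFirstZero x y =ᶠ[𝓝 p] fun _ => y (Nat.find h) := by
  filter_upwards [(isOpen_cylinder _ p (Nat.find h + 1)).mem_nhds (self_mem_cylinder p _)]
    with q hq
  have hqp : ∀ n ≤ Nat.find h, q n = p n := fun n hn =>
    mem_cylinder_iff.1 hq n (Nat.lt_succ_of_le hn)
  have hq0 : q (Nat.find h) = 0 := (hqp _ le_rfl).trans (Nat.find_spec h)
  rw [switchAtFirstZero_of_exists x y ⟨_, hq0⟩]
  congr 1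
  exact (Nat.find_eq_iff _).2
    ⟨hq0, fun n hn => by rw [hqp n hn.le]; exact Nat.find_min h hn⟩

theorem tendsto_switchAtFirstZero [TopologicalSpace β] (hy : Tendsto y atTop (𝓝 x)) {p : Baire}
    (h : ¬ ∃ n, p n = 0) : Tendsto (switchAtFirstZero x y) (𝓝 p) (𝓝 x) := by
  intro V hV
  obtain ⟨N, hN⟩ := eventually_atTop.1 (hy hV)
  rw [mem_map]
  filter_upwards [(isOpen_cylinder _ p N).mem_nhds (self_mem_cylinder p N)] with q hq
  rw [Set.mem_preimage]
  by_cases hq0 : ∃ n, q n = 0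
  · rw [switchAtFirstZero_of_exists x y hq0]
    refine hN _ ((Nat.le_find_iff _ _).2 fun m hm hqm => h ⟨m, ?_⟩)
    rwa [← mem_cylinder_iff.1 hq m hm]
  · rw [switchAtFirstZero_of_not_exists x y hq0]
    exact mem_of_mem_nhds hV

theorem continuous_switchAtFirstZero [TopologicalSpace β] (hy : Tendsto y atTop (𝓝 x)) :
    Continuous (switchAtFirstZero x y) := by
  refine continuous_iff_continuousAt.2 fun p => ?_
  by_cases h : ∃ n, p n = 0
  · exact continuousAt_const.congr (switchAtFirstZero_eventuallyEq x y h).symm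
  · rw [ContinuousAt, switchAtFirstZero_of_not_exists x y h]
    exact tendsto_switchAtFirstZero x y hy h

end SwitchAtFirstZero

/-- `LPO` is reducible to every discontinuous function. -/
theorem lpo_le_discontinuous (D : Set Baire) (F : Baire → Baire)
    (hF : ¬ ContinuousOn F D) :
    ∃ K H : Baire → Baire, Continuous K ∧ Continuous H ∧ Set.range K ⊆ D ∧
      ∀ p : Baire, ((∃ n, p n = 0) → H (F (K p)) 0 = 0) ∧
        ((¬ ∃ n, p n = 0) → H (F (K p)) 0 = 1) := by
  obtain ⟨x, hxD, hx⟩ : ∃ x ∈ D, ¬ ContinuousWithinAt F D x := by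
    simpa [ContinuousOn] using hF
  obtain ⟨i, hi⟩ : ∃ i, ¬ ContinuousWithinAt (F · i) D x := by
    simpa [continuousWithinAt_pi] using hx
  obtain ⟨y, hy, hyx⟩ := mem_closure_iff_seq_limit.1 (mem_closure_of_not_continuousWithinAt hi)
  let test : ℕ → Baire := fun t => if t = F x i then 1 else 0
  refine ⟨switchAtFirstZero x y, fun q => test (q i), continuous_switchAtFirstZero x y hyx,
    (continuous_of_discreteTopology (f := test)).comp (continuous_apply i),
    Set.range_subset_iff.2 (switchAtFirstZero_mem x y hxD fun n => (hy n).1),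
    fun p => ⟨fun h => ?_, fun h => ?_⟩⟩
  · simp [test, switchAtFirstZero_of_exists x y h, (hy _).2]
  · simp [test, switchAtFirstZero_of_not_exists x y h]
end

section
/- The parallelized LLPO absorbs its own composition: (\widehat{LLPO} ∘ \widehat{LLPO}) ≤_sW \widehat{LLPO}, where ∘ denotes composition of multi-valued functions. -/
/-- Composition of multi-valued functions: `(g ∘ f)(x) = {z | ∃ y ∈ f(x), z ∈ g(y)}`
if `x ∈ dom(f)` and `f(x) ⊆ dom(g)`, and `∅` otherwise. -/
def mComp (g f : MV) : MV := fun x =>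
  {z | (f x).Nonempty ∧ (∀ y ∈ f x, (g y).Nonempty) ∧ ∃ y ∈ f x, z ∈ g y}

/-!
Read `p ⟨k, 2n + b⟩`, `n ∈ ℕ`, as column `b` of row `k` of `p`. For `p` in the domain of the
composition let `y₀ k = 0` exactly when the even column of row `k` of `p` vanishes. Then `y₀`
solves `LLPO^ p`, and it is the pointwise least solution: `y k = 0` forces `y₀ k = 0`. Hence every
column that vanishes for some solution `y` vanishes for `y₀`, so `y₀` can always serve as the
intermediate answer. Column `b` of row `k` of `y₀` vanishes iff the even columns of all rows
`⟨k, 2n + b⟩` of `p` vanish, so the whole composition is answered by one instance of `LLPO^`.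
-/

def ColVanishes (p : Baire) (k b : ℕ) : Prop := ∀ n, p (Nat.pair k (2 * n + b)) = 0

/-- Column `b` of row `k` of `collapse p` interleaves the even columns of the rows `⟨k, 2n + b⟩`
of `p`. -/
def collapse (p : Baire) (j : ℕ) : ℕ :=
  p (Nat.pair (Nat.pair j.unpair.1 (2 * (j.unpair.2 / 2).unpair.1 + j.unpair.2 % 2))
    (2 * (j.unpair.2 / 2).unpair.2))

open Classical in
noncomputable def llpoChoice (p : Baire) (k : ℕ) : ℕ :=
  if ColVanishes p k 0 then 0 else 1

namespace parLLPO

theorem mem_iff {p q : Baire} : q ∈ parLLPO p ↔ ∀ k, q k < 2 ∧ ColVanishes p k (q k) := by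
  simp only [parLLPO, Set.mem_ofPred_eq, ColVanishes]
  refine forall_congr' fun k => ⟨?_, fun ⟨hlt, hcol⟩ => ?_⟩
  · rintro (⟨hq, hcol⟩ | ⟨hq, hcol⟩) <;> simpa [hq] using hcol
  · obtain hq | hq : q k = 0 ∨ q k = 1 := by omega
    · exact Or.inl ⟨hq, by simpa [hq] using hcol⟩
    · exact Or.inr ⟨hq, by simpa [hq] using hcol⟩

theorem mono {p p' : Baire} (h : ∀ k b, b < 2 → ColVanishes p k b → ColVanishes p' k b) :
    parLLPO p ⊆ parLLPO p' := by
  intro q hq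
  rw [mem_iff] at hq ⊢
  exact fun k => ⟨(hq k).1, h k _ (hq k).1 (hq k).2⟩

end parLLPO

theorem continuous_collapse : Continuous collapse :=
  continuous_pi fun _ => continuous_apply _

theorem collapse_pair (p : Baire) (k n m : ℕ) {b : ℕ} (hb : b < 2) :
    collapse p (Nat.pair k (2 * Nat.pair n m + b)) =
      p (Nat.pair (Nat.pair k (2 * n + b)) (2 * m)) := by
  have hdiv : (2 * Nat.pair n m + b) / 2 = Nat.pair n m := by omega
  have hmod : (2 * Nat.pair n m + b) % 2 = b := by omega
  simp only [collapse, Nat.unpair_pair, hdiv, hmod]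

theorem colVanishes_collapse_iff {p : Baire} {k b : ℕ} (hb : b < 2) :
    ColVanishes (collapse p) k b ↔ ∀ n, ColVanishes p (Nat.pair k (2 * n + b)) 0 := by
  simp only [ColVanishes, add_zero]
  constructor
  · intro h n m
    rw [← collapse_pair p k n m hb]
    exact h _
  · intro h t
    rw [← Nat.pair_unpair t, collapse_pair p k _ _ hb]
    exact h _ _

theorem llpoChoice_eq_zero_iff {p : Baire} {k : ℕ} : llpoChoice p k = 0 ↔ ColVanishes p k 0 := by
  unfold llpoChoice
  split_ifs with h <;> simp [h]

theorem llpoChoice_mem_parLLPO {p : Baire} (hp : (parLLPO p).Nonempty) :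
    llpoChoice p ∈ parLLPO p := by
  obtain ⟨q, hq⟩ := hp
  intro k
  by_cases hcol : ColVanishes p k 0
  · exact Or.inl ⟨llpoChoice_eq_zero_iff.2 hcol, by simpa [ColVanishes] using hcol⟩
  · refine Or.inr ⟨by simp [llpoChoice, hcol], ?_⟩
    rcases hq k with ⟨_, heven⟩ | ⟨_, hodd⟩
    · exact absurd (by simpa [ColVanishes] using heven) hcol
    · exact hodd

theorem colVanishes_collapse_of_mem_parLLPO {p y : Baire} (hy : y ∈ parLLPO p) {k b : ℕ}
    (hb : b < 2) (hcol : ColVanishes y k b) : ColVanishes (collapse p) k b := by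
  rw [colVanishes_collapse_iff hb]
  intro n
  simpa [hcol n] using (parLLPO.mem_iff.1 hy (Nat.pair k (2 * n + b))).2

theorem colVanishes_llpoChoice_of_collapse {p : Baire} {k b : ℕ} (hb : b < 2)
    (hcol : ColVanishes (collapse p) k b) : ColVanishes (llpoChoice p) k b :=
  fun n => llpoChoice_eq_zero_iff.2 ((colVanishes_collapse_iff hb).1 hcol n)

/-- The parallelized `LLPO` absorbs its own composition:
`\widehat{LLPO} ∘ \widehat{LLPO} ≤_sW \widehat{LLPO}`. -/
theorem parLLPO_comp_self : SWRed (mComp parLLPO parLLPO) parLLPO := by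
  refine ⟨id, collapse, continuous_id, continuous_collapse, fun G hG p hp => ?_⟩
  obtain ⟨z, hp_dom, hmid_dom, y, hy, hz⟩ := hp
  have hz' : z ∈ parLLPO (collapse p) :=
    parLLPO.mono (fun _ _ hb => colVanishes_collapse_of_mem_parLLPO hy hb) hz
  have hG' : G (collapse p) ∈ parLLPO (collapse p) := hG _ ⟨z, hz'⟩
  exact ⟨hp_dom, hmid_dom, llpoChoice p, llpoChoice_mem_parLLPO hp_dom,
    parLLPO.mono (fun _ _ hb => colVanishes_llpoChoice_of_collapse hb) hG'⟩
end
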